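/- Let G ∈ 𝒢_{2n} satisfy F(G) = n−1. Then f(G) ≥ ⌊n/2⌋. -/
import Mathlib


open SimpleGraph

/-- `M` is a perfect matching of the simple graph `G`, viewed as a set of edges:
the edges of `M` are pairwise disjoint edges of `G` covering every vertex. -/
def IsPM {V : Type*} (G : SimpleGraph V) (M : Set (Sym2 V)) : Prop :=
  M ⊆ G.edgeSet ∧
  (∀ e ∈ M, ∀ f ∈ M, e ≠ f → ∀ v : V, v ∈ e → v ∉ f) ∧
  (∀ v : V, ∃ e ∈ M, v ∈ e)

/-- `S` is a forcing set of the perfect matching `M` of `G`: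
`S ⊆ M` and `M` is the unique perfect matching of `G` containing `S`. -/
def IsForcingSet {V : Type*} (G : SimpleGraph V) (M S : Set (Sym2 V)) : Prop :=
  S ⊆ M ∧ ∀ M', IsPM G M' → S ⊆ M' → M' = M

/-- The forcing number `f(G,M)`: smallest cardinality of a forcing set of `M`. -/
noncomputable def forcingNum {V : Type*} (G : SimpleGraph V) (M : Set (Sym2 V)) : ℕ :=
  sInf {k | ∃ S, IsForcingSet G M S ∧ S.ncard = k}

/-- The minimum forcing number `f(G)`. -/
noncomputable def minForcing {V : Type*} (G : SimpleGraph V) : ℕ :=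
  sInf {k | ∃ M, IsPM G M ∧ forcingNum G M = k}

/-- The maximum forcing number `F(G)`. -/
noncomputable def maxForcing {V : Type*} (G : SimpleGraph V) : ℕ :=
  sSup {k | ∃ M, IsPM G M ∧ forcingNum G M = k}

/-- Vertex connectivity `κ(G)`: least size of a set of vertices whose deletion
disconnects the graph or leaves at most one vertex. -/
noncomputable def vertexConn {V : Type*} (G : SimpleGraph V) : ℕ :=
  sInf {k | ∃ X : Set V, X.ncard = k ∧ (¬ (G.induce Xᶜ).Connected ∨ Xᶜ.ncard ≤ 1)}

/-- Edge connectivity `λ(G)`: least size of a set of edges whose deletion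
disconnects the graph. -/
noncomputable def edgeConn {V : Type*} (G : SimpleGraph V) : ℕ :=
  sInf {k | ∃ F : Set (Sym2 V), F ⊆ G.edgeSet ∧ F.ncard = k ∧ ¬ (G.deleteEdges F).Connected}

/-- `G` is `l`-extendable: `G` is connected, has at least `2l+2` vertices, has a
perfect matching, and every matching of size `l` extends to a perfect matching. -/
def IsExtendable {V : Type*} [Fintype V] (G : SimpleGraph V) (l : ℕ) : Prop :=
  G.Connected ∧ 2 * l + 2 ≤ Fintype.card V ∧ (∃ M, IsPM G M) ∧
    ∀ N : Set (Sym2 V), N ⊆ G.edgeSet →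
      (∀ e ∈ N, ∀ f ∈ N, e ≠ f → ∀ v : V, v ∈ e → v ∉ f) → N.ncard = l →
      ∃ M, IsPM G M ∧ N ⊆ M

/-- `G` is factor-critical: deleting any vertex leaves a graph with a perfect matching. -/
def IsFactorCritical {V : Type*} (G : SimpleGraph V) : Prop :=
  ∀ v : V, ∃ M, IsPM (G.induce {v}ᶜ) M

/-- `o(G)`: the number of connected components of odd order. -/
noncomputable def oddComponents {V : Type*} (G : SimpleGraph V) : ℕ :=
  {c : G.ConnectedComponent | Odd c.supp.ncard}.ncard

/-- `G` belongs to `𝒦_{n,n}⁺`: it is obtained from `K_{n,n}` by adding edges inside one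
partite set; equivalently there is an independent set `A` of size `n` all of whose
vertices are adjacent to all vertices outside `A`. -/
def InKnnPlus {V : Type*} (n : ℕ) (G : SimpleGraph V) : Prop :=
  ∃ A : Set V, A.ncard = n ∧ (∀ a ∈ A, ∀ b ∈ A, ¬ G.Adj a b) ∧
    ∀ a ∈ A, ∀ b ∉ A, G.Adj a b

/-- `M` is a perfect matching of the subgraph of `G` induced by the vertex set `T`. -/
def IsPMOn {V : Type*} (G : SimpleGraph V) (T : Set V) (M : Set (Sym2 V)) : Prop :=
  M ⊆ G.edgeSet ∧ (∀ e ∈ M, ∀ w : V, w ∈ e → w ∈ T) ∧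
  (∀ e ∈ M, ∀ f ∈ M, e ≠ f → ∀ v : V, v ∈ e → v ∉ f) ∧
  (∀ w ∈ T, ∃ e ∈ M, w ∈ e)

/-- The forcing number of the perfect matching `M` of the subgraph of `G`
induced by the vertex set `T`. -/
noncomputable def forcingNumOn {V : Type*} (G : SimpleGraph V) (T : Set V)
    (M : Set (Sym2 V)) : ℕ :=
  sInf {k | ∃ S, S ⊆ M ∧ (∀ M', IsPMOn G T M' → S ⊆ M' → M' = M) ∧ S.ncard = k}

/-- `{i,j}` is one of the `k` special pairs `{2t, 2t+1}` (0-indexed), `t < k`. -/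
def pairIdx (k : ℕ) {n : ℕ} (i j : Fin n) : Prop :=
  ∃ t, t < k ∧ ((i.val = 2 * t ∧ j.val = 2 * t + 1) ∨ (j.val = 2 * t ∧ i.val = 2 * t + 1))

/-- The graph `H_k` on vertices `u_0,…,u_{n-1}` (left copy) and `v_0,…,v_{n-1}`
(right copy): edges `u_i v_i` for all `i`; `u_{2t} u_{2t+1}` and `v_{2t} v_{2t+1}`
for `t < k`; and `u_i v_j`, `u_j v_i` for every pair `i ≠ j` that is not one of the
`k` special pairs. -/
def Hgraph (n k : ℕ) : SimpleGraph (Fin n ⊕ Fin n) :=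
  SimpleGraph.fromRel (fun x y =>
    match x, y with
    | Sum.inl i, Sum.inr j => i = j ∨ ¬ pairIdx k i j
    | Sum.inl i, Sum.inl j => pairIdx k i j
    | Sum.inr i, Sum.inr j => pairIdx k i j
    | Sum.inr _, Sum.inl _ => False)

/-- The perfect matching `M₀ = {u_i v_i : i}` of `H_k`. -/
def M0 (n : ℕ) : Set (Sym2 (Fin n ⊕ Fin n)) :=
  {e | ∃ i : Fin n, e = s(Sum.inl i, Sum.inr i)}

section Helpers
variable {V : Type*} {G : SimpleGraph V} {M N S : Set (Sym2 V)}

/-- two edges of a PM sharing a vertex are equal -/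
lemma pm_unique_edge (hN : IsPM G N) {e f : Sym2 V} (he : e ∈ N) (hf : f ∈ N)
    {v : V} (hv : v ∈ e) (hv' : v ∈ f) : e = f := by
  by_contra h
  exact hN.2.1 e he f hf h v hv hv'

lemma pm_partner (hN : IsPM G N) : ∃ p : V → V, ∀ v, s(v, p v) ∈ N := by
  have h : ∀ v : V, ∃ w, s(v, w) ∈ N := by
    intro v
    obtain ⟨e, he, hv⟩ := hN.2.2 v
    induction e with
    | _ x y =>
      rcases Sym2.mem_iff.mp hv with rfl | rfl
      · exact ⟨y, he⟩
      · exact ⟨x, by rwa [Sym2.eq_swap]⟩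
  exact ⟨fun v => Classical.choose (h v), fun v => Classical.choose_spec (h v)⟩

lemma partner_adj (hN : IsPM G N) {v w : V} (h : s(v,w) ∈ N) : G.Adj v w :=
  G.mem_edgeSet.mp (hN.1 h)

lemma partner_ne (hN : IsPM G N) {v w : V} (h : s(v,w) ∈ N) : v ≠ w :=
  (partner_adj hN h).ne

lemma partner_unique (hN : IsPM G N) {v w w' : V} (h : s(v,w) ∈ N) (h' : s(v,w') ∈ N) :
    w = w' := by
  have := pm_unique_edge hN h h' (Sym2.mem_mk_left v w) (Sym2.mem_mk_left v w')
  rcases Sym2.eq_iff.mp this with ⟨-, h2⟩ | ⟨h1, h2⟩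
  · exact h2
  · rw [← h1, h2]

/-- a PM contained in another PM equals it -/
lemma pm_superset (hN : IsPM G N) (hM : IsPM G M) (hsub : N ⊆ M) : M = N := by
  ext e
  constructor
  · intro he
    obtain ⟨v, hv⟩ : ∃ v, v ∈ e := by
      induction e with
      | _ x y => exact ⟨x, Sym2.mem_mk_left x y⟩
    obtain ⟨f, hf, hvf⟩ := hN.2.2 v
    rwa [pm_unique_edge hM he (hsub hf) hv hvf]
  · exact fun he => hsub he

lemma pm_self_forcing (hN : IsPM G N) : IsForcingSet G N N :=
  ⟨le_refl _, fun M' hM' hsub => pm_superset hN hM' hsub⟩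

lemma forcingNum_le (hS : IsForcingSet G N S) : forcingNum G N ≤ S.ncard :=
  Nat.sInf_le ⟨S, hS, rfl⟩

lemma exists_forcing_ncard_eq (hN : IsPM G N) :
    ∃ S, IsForcingSet G N S ∧ S.ncard = forcingNum G N :=
  Nat.sInf_mem (⟨N.ncard, N, pm_self_forcing hN, rfl⟩ :
    Set.Nonempty {k | ∃ S, IsForcingSet G N S ∧ S.ncard = k})

end Helpers


section Main
variable {V : Type*} {G : SimpleGraph V} {M N S : Set (Sym2 V)}

lemma pm_card [Fintype V] (hN : IsPM G N) {p : V → V} (hp : ∀ v, s(v, p v) ∈ N) :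
    Fintype.card V = 2 * N.ncard := by
  classical
  have hfin : N.Finite := Set.toFinite N
  have hmap : ∀ v ∈ Finset.univ, (fun v => s(v, p v)) v ∈ hfin.toFinset := by
    intro v _; exact hfin.mem_toFinset.mpr (hp v)
  rw [← Finset.card_univ, Finset.card_eq_sum_card_fiberwise hmap]
  have hfib : ∀ e ∈ hfin.toFinset,
      (Finset.univ.filter (fun v => s(v, p v) = e)).card = 2 := by
    intro e he
    rw [Set.Finite.mem_toFinset] at he
    induction e with
    | _ x y =>
      have hxy : x ≠ y := by
        intro h; subst h
        exact (G.irrefl (G.mem_edgeSet.mp (hN.1 he)))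
      have : (Finset.univ.filter (fun v => s(v, p v) = s(x,y))) = {x, y} := by
        ext v
        simp only [Finset.mem_filter, Finset.mem_univ, true_and, Finset.mem_insert,
          Finset.mem_singleton]
        constructor
        · intro h
          have : v ∈ s(x,y) := h ▸ Sym2.mem_mk_left v (p v)
          exact Sym2.mem_iff.mp this
        · rintro (rfl | rfl)
          · exact pm_unique_edge hN (hp v) he (Sym2.mem_mk_left _ _) (Sym2.mem_mk_left _ _)
          · exact pm_unique_edge hN (hp v) he (Sym2.mem_mk_left _ _) (Sym2.mem_mk_right _ _)
      rw [this, Finset.card_insert_of_notMem (by simp [hxy]), Finset.card_singleton]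
  rw [Finset.sum_congr rfl hfib, Finset.sum_const, smul_eq_mul,
    Set.ncard_eq_toFinset_card' N, Set.Finite.card_toFinset, Set.toFinset_card]
  ring


lemma pm_disj_ne (hN : IsPM G N) {a b c d : V} (h1 : s(a,b) ∈ N) (h2 : s(c,d) ∈ N)
    (hne : s(a,b) ≠ s(c,d)) : a ≠ c ∧ a ≠ d ∧ b ≠ c ∧ b ≠ d := by
  have hdisj := hN.2.1 _ h1 _ h2 hne
  refine ⟨fun h => ?_, fun h => ?_, fun h => ?_, fun h => ?_⟩
  · exact hdisj a (Sym2.mem_mk_left a b) (h ▸ Sym2.mem_mk_left _ _)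
  · exact hdisj a (Sym2.mem_mk_left a b) (h ▸ Sym2.mem_mk_right _ _)
  · exact hdisj b (Sym2.mem_mk_right a b) (h ▸ Sym2.mem_mk_left _ _)
  · exact hdisj b (Sym2.mem_mk_right a b) (h ▸ Sym2.mem_mk_right _ _)

/-- The central swapping lemma: if `S` forces `N` and there is an alternative local
matching `σ` on the vertex set of a part `D ⊆ N` disjoint from `S`, contradiction. -/
lemma swap_core (hN : IsPM G N) (hS : IsForcingSet G N S) (D σ : Set (Sym2 V))
    (hD : D ⊆ N) (hDS : ∀ e ∈ D, e ∉ S) (hσG : σ ⊆ G.edgeSet)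
    (hσdisj : ∀ e ∈ σ, ∀ f ∈ σ, e ≠ f → ∀ v : V, v ∈ e → v ∉ f)
    (hcov : ∀ v : V, (∃ e ∈ D, v ∈ e) ↔ (∃ e ∈ σ, v ∈ e))
    (hne : ∃ e ∈ σ, e ∉ D) : False := by
  set N' : Set (Sym2 V) := (N \ D) ∪ σ with hN'def
  have hND : ∀ e ∈ N \ D, ∀ f ∈ σ, ∀ v : V, v ∈ e → v ∉ f := by
    rintro e ⟨heN, heD⟩ f hf v hv hvf
    obtain ⟨d, hd, hvd⟩ := (hcov v).mpr ⟨f, hf, hvf⟩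
    exact heD (pm_unique_edge hN heN (hD hd) hv hvd ▸ hd)
  have hPM' : IsPM G N' := by
    refine ⟨?_, ?_, ?_⟩
    · rintro e (⟨heN, -⟩ | he)
      · exact hN.1 heN
      · exact hσG he
    · rintro e (he | he) f (hf | hf) hef v hv
      · exact hN.2.1 e he.1 f hf.1 hef v hv
      · exact hND e he f hf v hv
      · intro hvf; exact hND f hf e he v hvf hv
      · exact hσdisj e he f hf hef v hv
    · intro v
      obtain ⟨e, he, hv⟩ := hN.2.2 v
      by_cases heD : e ∈ D
      · obtain ⟨f, hf, hvf⟩ := (hcov v).mp ⟨e, heD, hv⟩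
        exact ⟨f, Or.inr hf, hvf⟩
      · exact ⟨e, Or.inl ⟨he, heD⟩, hv⟩
  have hSN' : S ⊆ N' := by
    intro e he
    exact Or.inl ⟨hS.1 he, fun hD' => hDS e hD' he⟩
  have hEQ : N' = N := hS.2 N' hPM' hSN'
  obtain ⟨e, heσ, heD⟩ := hne
  obtain ⟨v, hv⟩ : ∃ v, v ∈ e := by
    induction e with
    | _ x y => exact ⟨x, Sym2.mem_mk_left x y⟩
  have heN : e ∈ N := hEQ ▸ (Or.inr heσ : e ∈ N')
  obtain ⟨d, hd, hvd⟩ := (hcov v).mpr ⟨e, heσ, hv⟩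
  exact heD (pm_unique_edge hN heN (hD hd) hv hvd ▸ hd)

/-- Swap on two N-edges `s(a,b)`, `s(c,d)` replaced by `s(a,d)`, `s(b,c)`. -/
lemma swap2 (hN : IsPM G N) (hS : IsForcingSet G N S) (a b c d : V)
    (h1 : s(a,b) ∈ N) (h2 : s(c,d) ∈ N) (hs1 : s(a,b) ∉ S) (hs2 : s(c,d) ∉ S)
    (hne : s(a,b) ≠ s(c,d)) (had : G.Adj a d) (hbc : G.Adj b c) : False := by
  have hdisj := hN.2.1 _ h1 _ h2 hne
  have hab : a ≠ b := (G.mem_edgeSet.mp (hN.1 h1)).ne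
  have hcd : c ≠ d := (G.mem_edgeSet.mp (hN.1 h2)).ne
  have hac : a ≠ c := fun h => hdisj a (Sym2.mem_mk_left a b) (h ▸ Sym2.mem_mk_left _ _)
  have had' : a ≠ d := had.ne
  have hbc' : b ≠ c := hbc.ne
  have hbd : b ≠ d := fun h => hdisj b (Sym2.mem_mk_right a b) (h ▸ Sym2.mem_mk_right _ _)
  refine swap_core hN hS {s(a,b), s(c,d)} {s(a,d), s(b,c)} ?_ ?_ ?_ ?_ ?_ ?_
  · rintro e (rfl | rfl) <;> assumption
  · rintro e (rfl | rfl) <;> assumption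
  · rintro e (rfl | rfl)
    · exact G.mem_edgeSet.mpr had
    · exact G.mem_edgeSet.mpr hbc
  · intro e he f hf hef v hv hvf
    rcases he with rfl | rfl <;> rcases hf with rfl | rfl
    · exact hef rfl
    · rcases Sym2.mem_iff.mp hv with rfl | rfl <;>
        rcases Sym2.mem_iff.mp hvf with h | h <;> simp_all
    · rcases Sym2.mem_iff.mp hv with rfl | rfl <;>
        rcases Sym2.mem_iff.mp hvf with h | h <;> simp_all
    · exact hef rfl
  · intro v
    constructor
    · rintro ⟨e, rfl | rfl, hv⟩ <;> rcases Sym2.mem_iff.mp hv with rfl | rfl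
      · exact ⟨s(v,d), by simp, by simp⟩
      · exact ⟨s(v,c), by simp, by simp⟩
      · exact ⟨s(b,v), by simp, by simp⟩
      · exact ⟨s(a,v), by simp, by simp⟩
    · rintro ⟨e, rfl | rfl, hv⟩ <;> rcases Sym2.mem_iff.mp hv with rfl | rfl
      · exact ⟨s(v,b), by simp, by simp⟩
      · exact ⟨s(c,v), by simp, by simp⟩
      · exact ⟨s(v,a), by simp, by simp⟩
      · exact ⟨s(v,d), by simp, by simp⟩
  · refine ⟨s(a,d), by simp, ?_⟩
    intro h
    rcases h with h | h
    · rw [Sym2.eq_iff] at h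
      rcases h with ⟨h1, h2⟩ | ⟨h1, h2⟩ <;> simp_all
    · rw [Set.mem_singleton_iff, Sym2.eq_iff] at h
      rcases h with ⟨h1, h2⟩ | ⟨h1, h2⟩ <;> simp_all


lemma swap3a (hN : IsPM G N) (hS : IsForcingSet G N S) (x1 x2 x3 x4 x5 x6 : V)
    (hD0 : s(x1,x2) ∈ N) (hs0 : s(x1,x2) ∉ S) (hD1 : s(x3,x4) ∈ N) (hs1 : s(x3,x4) ∉ S) (hD2 : s(x5,x6) ∈ N) (hs2 : s(x5,x6) ∉ S)
    (hne01 : s(x1,x2) ≠ s(x3,x4)) (hne02 : s(x1,x2) ≠ s(x5,x6)) (hne12 : s(x3,x4) ≠ s(x5,x6))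
    (hadj13 : G.Adj x1 x3) (hadj26 : G.Adj x2 x6) (hadj45 : G.Adj x4 x5) : False := by
  have hd0 : x1 ≠ x2 := (G.mem_edgeSet.mp (hN.1 hD0)).ne
  have hd1 : x3 ≠ x4 := (G.mem_edgeSet.mp (hN.1 hD1)).ne
  have hd2 : x5 ≠ x6 := (G.mem_edgeSet.mp (hN.1 hD2)).ne
  obtain ⟨hq13, hq14, hq23, hq24⟩ := pm_disj_ne hN hD0 hD1 hne01
  obtain ⟨hq15, hq16, hq25, hq26⟩ := pm_disj_ne hN hD0 hD2 hne02
  obtain ⟨hq35, hq36, hq45, hq46⟩ := pm_disj_ne hN hD1 hD2 hne12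
  refine swap_core hN hS {s(x1,x2), s(x3,x4), s(x5,x6)} {s(x1,x3), s(x2,x6), s(x4,x5)} ?_ ?_ ?_ ?_ ?_ ?_
  · rintro e (rfl | rfl | rfl) <;> assumption
  · rintro e (rfl | rfl | rfl) <;> assumption
  · rintro e (rfl | rfl | rfl)
    · exact G.mem_edgeSet.mpr hadj13
    · exact G.mem_edgeSet.mpr hadj26
    · exact G.mem_edgeSet.mpr hadj45
  · intro e he f hf hef v hv hvf
    rcases he with rfl | rfl | rfl <;> rcases hf with rfl | rfl | rfl <;>
      first
      | exact hef rfl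
      | (rcases Sym2.mem_iff.mp hv with rfl | rfl <;>
          rcases Sym2.mem_iff.mp hvf with h | h <;> simp_all)
  · intro v
    constructor
    · rintro ⟨e, rfl | rfl | rfl, hv⟩ <;> rcases Sym2.mem_iff.mp hv with rfl | rfl
      · exact ⟨s(v,x3), by simp, by simp⟩
      · exact ⟨s(v,x6), by simp, by simp⟩
      · exact ⟨s(x1,v), by simp, by simp⟩
      · exact ⟨s(v,x5), by simp, by simp⟩
      · exact ⟨s(x4,v), by simp, by simp⟩
      · exact ⟨s(x2,v), by simp, by simp⟩
    · rintro ⟨e, rfl | rfl | rfl, hv⟩ <;> rcases Sym2.mem_iff.mp hv with rfl | rfl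
      · exact ⟨s(v,x2), by simp, by simp⟩
      · exact ⟨s(v,x4), by simp, by simp⟩
      · exact ⟨s(x1,v), by simp, by simp⟩
      · exact ⟨s(x5,v), by simp, by simp⟩
      · exact ⟨s(x3,v), by simp, by simp⟩
      · exact ⟨s(v,x6), by simp, by simp⟩
  · refine ⟨s(x1,x3), by simp, ?_⟩
    intro h
    rcases h with h | h | h
    · rw [Sym2.eq_iff] at h
      rcases h with ⟨h1, h2⟩ | ⟨h1, h2⟩ <;> simp_all
    · rw [Sym2.eq_iff] at h
      rcases h with ⟨h1, h2⟩ | ⟨h1, h2⟩ <;> simp_all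
    · rw [Set.mem_singleton_iff, Sym2.eq_iff] at h
      rcases h with ⟨h1, h2⟩ | ⟨h1, h2⟩ <;> simp_all

lemma swap3b (hN : IsPM G N) (hS : IsForcingSet G N S) (x1 x2 x3 x4 x5 x6 : V)
    (hD0 : s(x1,x2) ∈ N) (hs0 : s(x1,x2) ∉ S) (hD1 : s(x3,x4) ∈ N) (hs1 : s(x3,x4) ∉ S) (hD2 : s(x5,x6) ∈ N) (hs2 : s(x5,x6) ∉ S)
    (hne01 : s(x1,x2) ≠ s(x3,x4)) (hne02 : s(x1,x2) ≠ s(x5,x6)) (hne12 : s(x3,x4) ≠ s(x5,x6))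
    (hadj15 : G.Adj x1 x5) (hadj26 : G.Adj x2 x6) : False := by
  have hd0 : x1 ≠ x2 := (G.mem_edgeSet.mp (hN.1 hD0)).ne
  have hd1 : x3 ≠ x4 := (G.mem_edgeSet.mp (hN.1 hD1)).ne
  have hd2 : x5 ≠ x6 := (G.mem_edgeSet.mp (hN.1 hD2)).ne
  obtain ⟨hq13, hq14, hq23, hq24⟩ := pm_disj_ne hN hD0 hD1 hne01
  obtain ⟨hq15, hq16, hq25, hq26⟩ := pm_disj_ne hN hD0 hD2 hne02
  obtain ⟨hq35, hq36, hq45, hq46⟩ := pm_disj_ne hN hD1 hD2 hne12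
  refine swap_core hN hS {s(x1,x2), s(x3,x4), s(x5,x6)} {s(x1,x5), s(x2,x6), s(x3,x4)} ?_ ?_ ?_ ?_ ?_ ?_
  · rintro e (rfl | rfl | rfl) <;> assumption
  · rintro e (rfl | rfl | rfl) <;> assumption
  · rintro e (rfl | rfl | rfl)
    · exact G.mem_edgeSet.mpr hadj15
    · exact G.mem_edgeSet.mpr hadj26
    · exact hN.1 hD1
  · intro e he f hf hef v hv hvf
    rcases he with rfl | rfl | rfl <;> rcases hf with rfl | rfl | rfl <;>
      first
      | exact hef rfl
      | (rcases Sym2.mem_iff.mp hv with rfl | rfl <;>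
          rcases Sym2.mem_iff.mp hvf with h | h <;> simp_all)
  · intro v
    constructor
    · rintro ⟨e, rfl | rfl | rfl, hv⟩ <;> rcases Sym2.mem_iff.mp hv with rfl | rfl
      · exact ⟨s(v,x5), by simp, by simp⟩
      · exact ⟨s(v,x6), by simp, by simp⟩
      · exact ⟨s(v,x4), by simp, by simp⟩
      · exact ⟨s(x3,v), by simp, by simp⟩
      · exact ⟨s(x1,v), by simp, by simp⟩
      · exact ⟨s(x2,v), by simp, by simp⟩
    · rintro ⟨e, rfl | rfl | rfl, hv⟩ <;> rcases Sym2.mem_iff.mp hv with rfl | rfl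
      · exact ⟨s(v,x2), by simp, by simp⟩
      · exact ⟨s(v,x6), by simp, by simp⟩
      · exact ⟨s(x1,v), by simp, by simp⟩
      · exact ⟨s(x5,v), by simp, by simp⟩
      · exact ⟨s(v,x4), by simp, by simp⟩
      · exact ⟨s(x3,v), by simp, by simp⟩
  · refine ⟨s(x1,x5), by simp, ?_⟩
    intro h
    rcases h with h | h | h
    · rw [Sym2.eq_iff] at h
      rcases h with ⟨h1, h2⟩ | ⟨h1, h2⟩ <;> simp_all
    · rw [Sym2.eq_iff] at h
      rcases h with ⟨h1, h2⟩ | ⟨h1, h2⟩ <;> simp_all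
    · rw [Set.mem_singleton_iff, Sym2.eq_iff] at h
      rcases h with ⟨h1, h2⟩ | ⟨h1, h2⟩ <;> simp_all

lemma swap4a (hN : IsPM G N) (hS : IsForcingSet G N S) (x1 x2 x3 x4 x5 x6 x7 x8 : V)
    (hD0 : s(x1,x2) ∈ N) (hs0 : s(x1,x2) ∉ S) (hD1 : s(x3,x4) ∈ N) (hs1 : s(x3,x4) ∉ S) (hD2 : s(x5,x6) ∈ N) (hs2 : s(x5,x6) ∉ S) (hD3 : s(x7,x8) ∈ N) (hs3 : s(x7,x8) ∉ S)
    (hne01 : s(x1,x2) ≠ s(x3,x4)) (hne02 : s(x1,x2) ≠ s(x5,x6)) (hne03 : s(x1,x2) ≠ s(x7,x8)) (hne12 : s(x3,x4) ≠ s(x5,x6)) (hne13 : s(x3,x4) ≠ s(x7,x8)) (hne23 : s(x5,x6) ≠ s(x7,x8))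
    (hadj17 : G.Adj x1 x7) (hadj25 : G.Adj x2 x5) (hadj38 : G.Adj x3 x8) (hadj46 : G.Adj x4 x6) : False := by
  have hd0 : x1 ≠ x2 := (G.mem_edgeSet.mp (hN.1 hD0)).ne
  have hd1 : x3 ≠ x4 := (G.mem_edgeSet.mp (hN.1 hD1)).ne
  have hd2 : x5 ≠ x6 := (G.mem_edgeSet.mp (hN.1 hD2)).ne
  have hd3 : x7 ≠ x8 := (G.mem_edgeSet.mp (hN.1 hD3)).ne
  obtain ⟨hq13, hq14, hq23, hq24⟩ := pm_disj_ne hN hD0 hD1 hne01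
  obtain ⟨hq15, hq16, hq25, hq26⟩ := pm_disj_ne hN hD0 hD2 hne02
  obtain ⟨hq17, hq18, hq27, hq28⟩ := pm_disj_ne hN hD0 hD3 hne03
  obtain ⟨hq35, hq36, hq45, hq46⟩ := pm_disj_ne hN hD1 hD2 hne12
  obtain ⟨hq37, hq38, hq47, hq48⟩ := pm_disj_ne hN hD1 hD3 hne13
  obtain ⟨hq57, hq58, hq67, hq68⟩ := pm_disj_ne hN hD2 hD3 hne23
  refine swap_core hN hS {s(x1,x2), s(x3,x4), s(x5,x6), s(x7,x8)} {s(x1,x7), s(x2,x5), s(x3,x8), s(x4,x6)} ?_ ?_ ?_ ?_ ?_ ?_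
  · rintro e (rfl | rfl | rfl | rfl) <;> assumption
  · rintro e (rfl | rfl | rfl | rfl) <;> assumption
  · rintro e (rfl | rfl | rfl | rfl)
    · exact G.mem_edgeSet.mpr hadj17
    · exact G.mem_edgeSet.mpr hadj25
    · exact G.mem_edgeSet.mpr hadj38
    · exact G.mem_edgeSet.mpr hadj46
  · intro e he f hf hef v hv hvf
    rcases he with rfl | rfl | rfl | rfl <;> rcases hf with rfl | rfl | rfl | rfl <;>
      first
      | exact hef rfl
      | (rcases Sym2.mem_iff.mp hv with rfl | rfl <;>
          rcases Sym2.mem_iff.mp hvf with h | h <;> simp_all)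
  · intro v
    constructor
    · rintro ⟨e, rfl | rfl | rfl | rfl, hv⟩ <;> rcases Sym2.mem_iff.mp hv with rfl | rfl
      · exact ⟨s(v,x7), by simp, by simp⟩
      · exact ⟨s(v,x5), by simp, by simp⟩
      · exact ⟨s(v,x8), by simp, by simp⟩
      · exact ⟨s(v,x6), by simp, by simp⟩
      · exact ⟨s(x2,v), by simp, by simp⟩
      · exact ⟨s(x4,v), by simp, by simp⟩
      · exact ⟨s(x1,v), by simp, by simp⟩
      · exact ⟨s(x3,v), by simp, by simp⟩
    · rintro ⟨e, rfl | rfl | rfl | rfl, hv⟩ <;> rcases Sym2.mem_iff.mp hv with rfl | rfl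
      · exact ⟨s(v,x2), by simp, by simp⟩
      · exact ⟨s(v,x8), by simp, by simp⟩
      · exact ⟨s(x1,v), by simp, by simp⟩
      · exact ⟨s(v,x6), by simp, by simp⟩
      · exact ⟨s(v,x4), by simp, by simp⟩
      · exact ⟨s(x7,v), by simp, by simp⟩
      · exact ⟨s(x3,v), by simp, by simp⟩
      · exact ⟨s(x5,v), by simp, by simp⟩
  · refine ⟨s(x1,x7), by simp, ?_⟩
    intro h
    rcases h with h | h | h | h
    · rw [Sym2.eq_iff] at h
      rcases h with ⟨h1, h2⟩ | ⟨h1, h2⟩ <;> simp_all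
    · rw [Sym2.eq_iff] at h
      rcases h with ⟨h1, h2⟩ | ⟨h1, h2⟩ <;> simp_all
    · rw [Sym2.eq_iff] at h
      rcases h with ⟨h1, h2⟩ | ⟨h1, h2⟩ <;> simp_all
    · rw [Set.mem_singleton_iff, Sym2.eq_iff] at h
      rcases h with ⟨h1, h2⟩ | ⟨h1, h2⟩ <;> simp_all

lemma swap4b (hN : IsPM G N) (hS : IsForcingSet G N S) (x1 x2 x3 x4 x5 x6 x7 x8 : V)
    (hD0 : s(x1,x2) ∈ N) (hs0 : s(x1,x2) ∉ S) (hD1 : s(x3,x4) ∈ N) (hs1 : s(x3,x4) ∉ S) (hD2 : s(x5,x6) ∈ N) (hs2 : s(x5,x6) ∉ S) (hD3 : s(x7,x8) ∈ N) (hs3 : s(x7,x8) ∉ S)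
    (hne01 : s(x1,x2) ≠ s(x3,x4)) (hne02 : s(x1,x2) ≠ s(x5,x6)) (hne03 : s(x1,x2) ≠ s(x7,x8)) (hne12 : s(x3,x4) ≠ s(x5,x6)) (hne13 : s(x3,x4) ≠ s(x7,x8)) (hne23 : s(x5,x6) ≠ s(x7,x8))
    (hadj16 : G.Adj x1 x6) (hadj28 : G.Adj x2 x8) (hadj35 : G.Adj x3 x5) (hadj47 : G.Adj x4 x7) : False := by
  have hd0 : x1 ≠ x2 := (G.mem_edgeSet.mp (hN.1 hD0)).ne
  have hd1 : x3 ≠ x4 := (G.mem_edgeSet.mp (hN.1 hD1)).ne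
  have hd2 : x5 ≠ x6 := (G.mem_edgeSet.mp (hN.1 hD2)).ne
  have hd3 : x7 ≠ x8 := (G.mem_edgeSet.mp (hN.1 hD3)).ne
  obtain ⟨hq13, hq14, hq23, hq24⟩ := pm_disj_ne hN hD0 hD1 hne01
  obtain ⟨hq15, hq16, hq25, hq26⟩ := pm_disj_ne hN hD0 hD2 hne02
  obtain ⟨hq17, hq18, hq27, hq28⟩ := pm_disj_ne hN hD0 hD3 hne03
  obtain ⟨hq35, hq36, hq45, hq46⟩ := pm_disj_ne hN hD1 hD2 hne12
  obtain ⟨hq37, hq38, hq47, hq48⟩ := pm_disj_ne hN hD1 hD3 hne13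
  obtain ⟨hq57, hq58, hq67, hq68⟩ := pm_disj_ne hN hD2 hD3 hne23
  refine swap_core hN hS {s(x1,x2), s(x3,x4), s(x5,x6), s(x7,x8)} {s(x1,x6), s(x2,x8), s(x3,x5), s(x4,x7)} ?_ ?_ ?_ ?_ ?_ ?_
  · rintro e (rfl | rfl | rfl | rfl) <;> assumption
  · rintro e (rfl | rfl | rfl | rfl) <;> assumption
  · rintro e (rfl | rfl | rfl | rfl)
    · exact G.mem_edgeSet.mpr hadj16
    · exact G.mem_edgeSet.mpr hadj28
    · exact G.mem_edgeSet.mpr hadj35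
    · exact G.mem_edgeSet.mpr hadj47
  · intro e he f hf hef v hv hvf
    rcases he with rfl | rfl | rfl | rfl <;> rcases hf with rfl | rfl | rfl | rfl <;>
      first
      | exact hef rfl
      | (rcases Sym2.mem_iff.mp hv with rfl | rfl <;>
          rcases Sym2.mem_iff.mp hvf with h | h <;> simp_all)
  · intro v
    constructor
    · rintro ⟨e, rfl | rfl | rfl | rfl, hv⟩ <;> rcases Sym2.mem_iff.mp hv with rfl | rfl
      · exact ⟨s(v,x6), by simp, by simp⟩
      · exact ⟨s(v,x8), by simp, by simp⟩
      · exact ⟨s(v,x5), by simp, by simp⟩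
      · exact ⟨s(v,x7), by simp, by simp⟩
      · exact ⟨s(x3,v), by simp, by simp⟩
      · exact ⟨s(x1,v), by simp, by simp⟩
      · exact ⟨s(x4,v), by simp, by simp⟩
      · exact ⟨s(x2,v), by simp, by simp⟩
    · rintro ⟨e, rfl | rfl | rfl | rfl, hv⟩ <;> rcases Sym2.mem_iff.mp hv with rfl | rfl
      · exact ⟨s(v,x2), by simp, by simp⟩
      · exact ⟨s(x5,v), by simp, by simp⟩
      · exact ⟨s(x1,v), by simp, by simp⟩
      · exact ⟨s(x7,v), by simp, by simp⟩
      · exact ⟨s(v,x4), by simp, by simp⟩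
      · exact ⟨s(v,x6), by simp, by simp⟩
      · exact ⟨s(x3,v), by simp, by simp⟩
      · exact ⟨s(v,x8), by simp, by simp⟩
  · refine ⟨s(x1,x6), by simp, ?_⟩
    intro h
    rcases h with h | h | h | h
    · rw [Sym2.eq_iff] at h
      rcases h with ⟨h1, h2⟩ | ⟨h1, h2⟩ <;> simp_all
    · rw [Sym2.eq_iff] at h
      rcases h with ⟨h1, h2⟩ | ⟨h1, h2⟩ <;> simp_all
    · rw [Sym2.eq_iff] at h
      rcases h with ⟨h1, h2⟩ | ⟨h1, h2⟩ <;> simp_all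
    · rw [Set.mem_singleton_iff, Sym2.eq_iff] at h
      rcases h with ⟨h1, h2⟩ | ⟨h1, h2⟩ <;> simp_all

end Main

section Star
variable {V : Type*} {G : SimpleGraph V} {M N S : Set (Sym2 V)}

/-- abbreviation for the pair-swap property of a maximum PM -/
def StarProp {V : Type*} (G : SimpleGraph V) (M : Set (Sym2 V)) : Prop :=
  ∀ a b c d : V, s(a,b) ∈ M → s(c,d) ∈ M → s(a,b) ≠ s(c,d) →
    (G.Adj a c ∧ G.Adj b d) ∨ (G.Adj a d ∧ G.Adj b c)

lemma ne_of_lmem {v x y : V} {e : Sym2 V} (hv : v ∈ e) (h1 : v ≠ x) (h2 : v ≠ y) :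
    e ≠ s(x,y) := by
  intro h
  rcases Sym2.mem_iff.mp (h ▸ hv) with h' | h'
  · exact h1 h'
  · exact h2 h'

lemma mem_swap {v w : V} {A : Set (Sym2 V)} (h : s(v,w) ∈ A) : s(w,v) ∈ A := by
  rwa [Sym2.eq_swap]

lemma nmem_swap {v w : V} {A : Set (Sym2 V)} (h : s(v,w) ∉ A) : s(w,v) ∉ A := by
  rwa [Sym2.eq_swap]

/-- frozen edge + domino, first orientation -/
lemma frozdom_aux (hN : IsPM G N) (hS : IsForcingSet G N S) (hM : IsPM G M)
    (hstar : StarProp G M) (x y a b c d la rd : V)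
    (hfN : s(x,y) ∈ N) (hfS : s(x,y) ∉ S) (hfM : s(x,y) ∈ M)
    (hgN : s(a,b) ∈ N) (hgS : s(a,b) ∉ S)
    (hg'N : s(c,d) ∈ N) (hg'S : s(c,d) ∉ S)
    (heM : s(b,c) ∈ M) (hLM : s(a,la) ∈ M) (hRM : s(d,rd) ∈ M)
    (hfg : s(x,y) ≠ s(a,b)) (hfg' : s(x,y) ≠ s(c,d)) (hgg' : s(a,b) ≠ s(c,d))
    (hxb : G.Adj x b) (hyc : G.Adj y c) : False := by
  obtain ⟨hxa, hxb', hya, hyb⟩ := pm_disj_ne hN hfN hgN hfg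
  obtain ⟨hxc, hxd, hyc', hyd⟩ := pm_disj_ne hN hfN hg'N hfg'
  have hfL : s(x,y) ≠ s(a,la) := (ne_of_lmem (Sym2.mem_mk_left a la) hxa.symm hya.symm).symm
  have hfR : s(x,y) ≠ s(d,rd) := (ne_of_lmem (Sym2.mem_mk_left d rd) hxd.symm hyd.symm).symm
  rcases hstar x y a la hfM hLM hfL with ⟨hxa', -⟩ | ⟨-, hya'⟩
  · -- x–a available
    rcases hstar x y d rd hfM hRM hfR with ⟨hxd', -⟩ | ⟨-, hyd'⟩
    · -- x–d : swap on {f, g'} with σ = {s(y,c), s(x,d)}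
      exact swap2 hN hS y x d c (mem_swap hfN) (mem_swap hg'N) (nmem_swap hfS)
        (nmem_swap hg'S) (fun h => hfg' (by rw [Sym2.eq_swap, h, Sym2.eq_swap]))
        hyc hxd'
    · -- y–d : swap3a on {f, g, g'} with σ = {s(x,a), s(y,d), s(b,c)}
      exact swap3a hN hS x y a b c d hfN hfS hgN hgS hg'N hg'S hfg hfg' hgg'
        hxa' hyd' (G.mem_edgeSet.mp (hM.1 heM))
  · -- y–a : swap on {f, g} with σ = {s(x,b), s(y,a)}
    exact swap2 hN hS x y a b hfN hgN hfS hgS hfg hxb hya'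

lemma frozdom (hN : IsPM G N) (hS : IsForcingSet G N S) (hM : IsPM G M)
    (hstar : StarProp G M) (x y a b c d la rd : V)
    (hfN : s(x,y) ∈ N) (hfS : s(x,y) ∉ S) (hfM : s(x,y) ∈ M)
    (hgN : s(a,b) ∈ N) (hgS : s(a,b) ∉ S)
    (hg'N : s(c,d) ∈ N) (hg'S : s(c,d) ∉ S)
    (heM : s(b,c) ∈ M) (hLM : s(a,la) ∈ M) (hRM : s(d,rd) ∈ M)
    (hfg : s(x,y) ≠ s(a,b)) (hfg' : s(x,y) ≠ s(c,d)) (hgg' : s(a,b) ≠ s(c,d)) :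
    False := by
  obtain ⟨hxa, hxb, hya, hyb⟩ := pm_disj_ne hN hfN hgN hfg
  have hfe : s(x,y) ≠ s(b,c) := (ne_of_lmem (Sym2.mem_mk_left b c) hxb.symm hyb.symm).symm
  rcases hstar x y b c hfM heM hfe with ⟨hxb', hyc'⟩ | ⟨hxc', hyb'⟩
  · exact frozdom_aux hN hS hM hstar x y a b c d la rd hfN hfS hfM hgN hgS hg'N hg'S
      heM hLM hRM hfg hfg' hgg' hxb' hyc'
  · exact frozdom_aux hN hS hM hstar x y d c b a rd la hfN hfS hfM (mem_swap hg'N)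
      (nmem_swap hg'S) (mem_swap hgN) (nmem_swap hgS) (mem_swap heM) hRM hLM
      (fun h => hfg' (by rw [h, Sym2.eq_swap]))
      (fun h => hfg (by rw [h, Sym2.eq_swap]))
      (fun h => hgg' (by rw [Sym2.eq_swap, ← h, Sym2.eq_swap]))
      hxc' hyb'

/-- run of three R-edges -/
lemma run3 (hN : IsPM G N) (hS : IsForcingSet G N S) (hM : IsPM G M)
    (hstar : StarProp G M) (v1 v2 v3 v4 v5 v6 u0 w0 : V)
    (hD0 : s(v1,v2) ∈ N) (hs0 : s(v1,v2) ∉ S)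
    (hD1 : s(v3,v4) ∈ N) (hs1 : s(v3,v4) ∉ S)
    (hD2 : s(v5,v6) ∈ N) (hs2 : s(v5,v6) ∉ S)
    (hne01 : s(v1,v2) ≠ s(v3,v4)) (hne02 : s(v1,v2) ≠ s(v5,v6))
    (hne12 : s(v3,v4) ≠ s(v5,v6))
    (hpM : s(v2,v3) ∈ M) (hqM : s(v4,v5) ∈ M)
    (huM : s(v1,u0) ∈ M) (hwM : s(v6,w0) ∈ M) : False := by
  obtain ⟨h13, h14, h23, h24⟩ := pm_disj_ne hN hD0 hD1 hne01
  obtain ⟨h15, h16, h25, h26⟩ := pm_disj_ne hN hD0 hD2 hne02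
  obtain ⟨h35, h36, h45, h46⟩ := pm_disj_ne hN hD1 hD2 hne12
  have huq : s(u0,v1) ≠ s(v4,v5) := ne_of_lmem (Sym2.mem_mk_right u0 v1) h14 h15
  rcases hstar u0 v1 v4 v5 (mem_swap huM) hqM huq with ⟨-, h15'⟩ | ⟨-, h14'⟩
  · -- v1–v5
    have hpw : s(v2,v3) ≠ s(v6,w0) :=
      (ne_of_lmem (Sym2.mem_mk_left v6 w0) h26.symm h36.symm).symm
    rcases hstar v2 v3 v6 w0 hpM hwM hpw with ⟨h26', -⟩ | ⟨-, h36'⟩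
    · -- v2–v6 : swap3b
      exact swap3b hN hS v1 v2 v3 v4 v5 v6 hD0 hs0 hD1 hs1 hD2 hs2 hne01 hne02 hne12
        h15' h26'
    · -- v3–v6 : swap2 on {gB,gC}
      exact swap2 hN hS v4 v3 v6 v5 (mem_swap hD1) (mem_swap hD2) (nmem_swap hs1)
        (nmem_swap hs2)
        (fun h => hne12 (by rw [Sym2.eq_swap, h, Sym2.eq_swap]))
        (G.mem_edgeSet.mp (hM.1 hqM)) h36'
  · -- v1–v4 : swap2 on {gA,gB}
    exact swap2 hN hS v1 v2 v3 v4 hD0 hD1 hs0 hs1 hne01 h14'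
      (G.mem_edgeSet.mp (hM.1 hpM))

end Star

section TwoDom
variable {V : Type*} {G : SimpleGraph V} {M N S : Set (Sym2 V)}

/-- two disjoint dominoes -/
lemma twodom (hN : IsPM G N) (hS : IsForcingSet G N S) (hM : IsPM G M)
    (hstar : StarProp G M) (a1 b1 c1 d1 a2 b2 c2 d2 l1 r1 l2 r2 : V)
    (hg1 : s(a1,b1) ∈ N) (hs1 : s(a1,b1) ∉ S)
    (hg1' : s(c1,d1) ∈ N) (hs1' : s(c1,d1) ∉ S)
    (hg2 : s(a2,b2) ∈ N) (hs2 : s(a2,b2) ∉ S)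
    (hg2' : s(c2,d2) ∈ N) (hs2' : s(c2,d2) ∉ S)
    (h11' : s(a1,b1) ≠ s(c1,d1)) (h12 : s(a1,b1) ≠ s(a2,b2))
    (h12' : s(a1,b1) ≠ s(c2,d2)) (h1'2 : s(c1,d1) ≠ s(a2,b2))
    (h1'2' : s(c1,d1) ≠ s(c2,d2)) (h22' : s(a2,b2) ≠ s(c2,d2))
    (he1 : s(b1,c1) ∈ M) (he2 : s(b2,c2) ∈ M)
    (hL1 : s(a1,l1) ∈ M) (hR1 : s(d1,r1) ∈ M)
    (hL2 : s(a2,l2) ∈ M) (hR2 : s(d2,r2) ∈ M) : False := by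
  obtain ⟨q11, q12, q13, q14⟩ := pm_disj_ne hN hg1 hg1' h11'   -- a1≠c1 a1≠d1 b1≠c1 b1≠d1
  obtain ⟨q21, q22, q23, q24⟩ := pm_disj_ne hN hg1 hg2 h12     -- a1≠a2 a1≠b2 b1≠a2 b1≠b2
  obtain ⟨q31, q32, q33, q34⟩ := pm_disj_ne hN hg1 hg2' h12'   -- a1≠c2 a1≠d2 b1≠c2 b1≠d2
  obtain ⟨q41, q42, q43, q44⟩ := pm_disj_ne hN hg1' hg2 h1'2   -- c1≠a2 c1≠b2 d1≠a2 d1≠b2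
  obtain ⟨q51, q52, q53, q54⟩ := pm_disj_ne hN hg1' hg2' h1'2' -- c1≠c2 c1≠d2 d1≠c2 d1≠d2
  obtain ⟨q61, q62, q63, q64⟩ := pm_disj_ne hN hg2 hg2' h22'   -- a2≠c2 a2≠d2 b2≠c2 b2≠d2
  have hA7ne : s(l1,a1) ≠ s(b2,c2) := ne_of_lmem (Sym2.mem_mk_right l1 a1) q22 q31
  have hA9ne : s(b1,c1) ≠ s(a2,l2) :=
    (ne_of_lmem (Sym2.mem_mk_left a2 l2) q23.symm q41.symm).symm
  have hA11ne : s(b1,c1) ≠ s(d2,r2) :=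
    (ne_of_lmem (Sym2.mem_mk_left d2 r2) q34.symm q52.symm).symm
  have hA13ne : s(d1,r1) ≠ s(b2,c2) := ne_of_lmem (Sym2.mem_mk_left d1 r1) q44 q53
  rcases hstar b1 c1 d2 r2 he1 hR2 hA11ne with ⟨hb1d2, -⟩ | ⟨-, hc1d2⟩
  · -- bit11 = 1 : b1–d2
    rcases hstar l1 a1 b2 c2 (mem_swap hL1) he2 hA7ne with ⟨-, ha1c2⟩ | ⟨-, ha1b2⟩
    · -- bit7 = 1 : a1–c2 : r5 : swap2 (a1,b1,d2,c2)
      exact swap2 hN hS a1 b1 d2 c2 hg1 (mem_swap hg2') hs1 (nmem_swap hs2')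
        (fun h => h12' (by rw [h, Sym2.eq_swap])) ha1c2 hb1d2
    · -- bit7 = 0 : a1–b2
      rcases hstar b1 c1 a2 l2 he1 hL2 hA9ne with ⟨hb1a2, -⟩ | ⟨-, hc1a2⟩
      ·
        exact swap2 hN hS a1 b1 a2 b2 hg1 hg2 hs1 hs2 h12 ha1b2 hb1a2
      · -- bit9 = 1 : c1–a2
        rcases hstar d1 r1 b2 c2 hR1 he2 hA13ne with ⟨hd1b2, -⟩ | ⟨hd1c2, -⟩
        · -- bit13 = 1 : d1–b2 : r7 : swap2 (c1,d1,b2,a2) σ={s(c1,a2), s(d1,b2)}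
          exact swap2 hN hS c1 d1 b2 a2 hg1' (mem_swap hg2) hs1' (nmem_swap hs2)
            (fun h => h1'2 (by rw [h, Sym2.eq_swap])) hc1a2 hd1b2
        · -- bit13 = 0 : d1–c2 : r9 : swap4b
          exact swap4b hN hS a1 b1 c1 d1 a2 b2 c2 d2 hg1 hs1 hg1' hs1' hg2 hs2 hg2' hs2'
            h11' h12 h12' h1'2 h1'2' h22' ha1b2 hb1d2 hc1a2 hd1c2
  · -- bit11 = 0 : c1–d2
    rcases hstar d1 r1 b2 c2 hR1 he2 hA13ne with ⟨hd1b2, -⟩ | ⟨hd1c2, -⟩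
    · -- bit13 = 1 : d1–b2
      rcases hstar b1 c1 a2 l2 he1 hL2 hA9ne with ⟨hb1a2, -⟩ | ⟨-, hc1a2⟩
      · -- bit9 = 0 : b1–a2
        rcases hstar l1 a1 b2 c2 (mem_swap hL1) he2 hA7ne with ⟨-, ha1c2⟩ | ⟨-, ha1b2⟩
        · -- bit7=1 : a1–c2 : r8 : swap4a
          exact swap4a hN hS a1 b1 c1 d1 a2 b2 c2 d2 hg1 hs1 hg1' hs1' hg2 hs2 hg2' hs2'
            h11' h12 h12' h1'2 h1'2' h22' ha1c2 hb1a2 hc1d2 hd1b2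
        · -- bit7=0 : a1–b2 : r3
          exact swap2 hN hS a1 b1 a2 b2 hg1 hg2 hs1 hs2 h12 ha1b2 hb1a2
      · -- bit9 = 1 : c1–a2 : r7
        exact swap2 hN hS c1 d1 b2 a2 hg1' (mem_swap hg2) hs1' (nmem_swap hs2)
          (fun h => h1'2 (by rw [h, Sym2.eq_swap])) hc1a2 hd1b2
    · -- bit13 = 0 : d1–c2 : r6 : swap2 (c1,d1,c2,d2) σ={s(c1,d2), s(d1,c2)}
      exact swap2 hN hS c1 d1 c2 d2 hg1' hg2' hs1' hs2' h1'2' hc1d2 hd1c2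
end TwoDom

section StarDerive
variable {V : Type*} {G : SimpleGraph V} {M N S : Set (Sym2 V)}

lemma star_of_max [Finite V] {n : ℕ} (hM : IsPM G M) (hforce : forcingNum G M = n - 1)
    (hMcard : M.ncard = n) (hn : 2 ≤ n) : StarProp G M := by
  intro a b c d habM hcdM hne
  by_contra hcon
  rw [not_or] at hcon
  obtain ⟨hac, had, hbc, hbd⟩ := pm_disj_ne hM habM hcdM hne
  have hab : a ≠ b := (G.mem_edgeSet.mp (hM.1 habM)).ne
  have hcd : c ≠ d := (G.mem_edgeSet.mp (hM.1 hcdM)).ne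
  have hforceset : IsForcingSet G M (M \ {s(a,b), s(c,d)}) := by
    refine ⟨Set.diff_subset, ?_⟩
    intro M' hM' hsub
    have locate : ∀ u u' : V, s(u,u') ∈ M' → u' ∈ s(a,b) ∨ u' ∈ s(c,d) ∨ s(u,u') ∈ M := by
      intro u u' huu'
      obtain ⟨g, hg, hu'g⟩ := hM.2.2 u'
      by_cases h1 : g = s(a,b)
      · exact Or.inl (h1 ▸ hu'g)
      by_cases h2 : g = s(c,d)
      · exact Or.inr (Or.inl (h2 ▸ hu'g))
      have hgM' : g ∈ M' := hsub ⟨hg, by simp [h1, h2]⟩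
      have hgeq : g = s(u,u') := pm_unique_edge hM' hgM' huu' hu'g (Sym2.mem_mk_right u u')
      exact Or.inr (Or.inr (hgeq ▸ hg))
    obtain ⟨p', hp'⟩ := pm_partner hM'
    have hw : p' a = b ∨ p' a = c ∨ p' a = d := by
      rcases locate a (p' a) (hp' a) with h | h | h
      · rcases Sym2.mem_iff.mp h with h' | h'
        · exact absurd h'.symm (partner_ne hM' (hp' a))
        · exact Or.inl h'
      · rcases Sym2.mem_iff.mp h with h' | h'
        · exact Or.inr (Or.inl h')
        · exact Or.inr (Or.inr h')
      · exact Or.inl (partner_unique hM h habM)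
    rcases hw with hw | hw | hw
    · -- a matched to b : then c must match d and M' = M
      have habM' : s(a,b) ∈ M' := hw ▸ hp' a
      have hw' : p' c = d := by
        rcases locate c (p' c) (hp' c) with h | h | h
        · rcases Sym2.mem_iff.mp h with h' | h'
          · exfalso
            have := pm_unique_edge hM' (h' ▸ hp' c) habM'
              (Sym2.mem_mk_right c a) (Sym2.mem_mk_left a b)
            rcases Sym2.eq_iff.mp this with ⟨h1, h2⟩ | ⟨h1, h2⟩ <;> simp_all
          · exfalso
            have := pm_unique_edge hM' (h' ▸ hp' c) habM'
              (Sym2.mem_mk_right c b) (Sym2.mem_mk_right a b)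
            rcases Sym2.eq_iff.mp this with ⟨h1, h2⟩ | ⟨h1, h2⟩ <;> simp_all
        · rcases Sym2.mem_iff.mp h with h' | h'
          · exact absurd h'.symm (partner_ne hM' (hp' c))
          · exact h'
        · exact partner_unique hM h hcdM
      have hcdM' : s(c,d) ∈ M' := hw' ▸ hp' c
      have hMM' : M ⊆ M' := by
        intro g hg
        by_cases h1 : g = s(a,b)
        · exact h1 ▸ habM'
        by_cases h2 : g = s(c,d)
        · exact h2 ▸ hcdM'
        · exact hsub ⟨hg, by simp [h1, h2]⟩
      exact pm_superset hM hM' hMM'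
    · -- a matched to c
      exfalso
      have hacM' : s(a,c) ∈ M' := hw ▸ hp' a
      have hAac : G.Adj a c := G.mem_edgeSet.mp (hM'.1 hacM')
      have hw'' : p' b = d := by
        rcases locate b (p' b) (hp' b) with h | h | h
        · rcases Sym2.mem_iff.mp h with h' | h'
          · exfalso
            have := pm_unique_edge hM' (h' ▸ hp' b) hacM'
              (Sym2.mem_mk_right b a) (Sym2.mem_mk_left a c)
            rcases Sym2.eq_iff.mp this with ⟨h1, h2⟩ | ⟨h1, h2⟩ <;> simp_all
          · exact absurd h'.symm (partner_ne hM' (hp' b))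
        · rcases Sym2.mem_iff.mp h with h' | h'
          · exfalso
            have := pm_unique_edge hM' (h' ▸ hp' b) hacM'
              (Sym2.mem_mk_right b c) (Sym2.mem_mk_right a c)
            rcases Sym2.eq_iff.mp this with ⟨h1, h2⟩ | ⟨h1, h2⟩ <;> simp_all
          · exact h'
        · exfalso
          have hpb : p' b = a := partner_unique hM h (mem_swap habM)
          have hbaM' : s(b,a) ∈ M' := hpb ▸ hp' b
          have := pm_unique_edge hM' hbaM' (hp' a)
            (Sym2.mem_mk_right b a) (Sym2.mem_mk_left a (p' a))
          rcases Sym2.eq_iff.mp this with ⟨h1, -⟩ | ⟨h1, -⟩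
          · exact hab h1.symm
          · exact hbc (h1.trans hw)
      have : G.Adj b d := G.mem_edgeSet.mp (hM'.1 (hw'' ▸ hp' b))
      exact hcon.1 ⟨hAac, this⟩
    · -- a matched to d
      exfalso
      have hadM' : s(a,d) ∈ M' := hw ▸ hp' a
      have hAad : G.Adj a d := G.mem_edgeSet.mp (hM'.1 hadM')
      have hw'' : p' b = c := by
        rcases locate b (p' b) (hp' b) with h | h | h
        · rcases Sym2.mem_iff.mp h with h' | h'
          · exfalso
            have := pm_unique_edge hM' (h' ▸ hp' b) hadM'
              (Sym2.mem_mk_right b a) (Sym2.mem_mk_left a d)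
            rcases Sym2.eq_iff.mp this with ⟨h1, h2⟩ | ⟨h1, h2⟩ <;> simp_all
          · exact absurd h'.symm (partner_ne hM' (hp' b))
        · rcases Sym2.mem_iff.mp h with h' | h'
          · exact h'
          · exfalso
            have := pm_unique_edge hM' (h' ▸ hp' b) hadM'
              (Sym2.mem_mk_right b d) (Sym2.mem_mk_right a d)
            rcases Sym2.eq_iff.mp this with ⟨h1, h2⟩ | ⟨h1, h2⟩ <;> simp_all
        · exfalso
          have hpb : p' b = a := partner_unique hM h (mem_swap habM)
          have hbaM' : s(b,a) ∈ M' := hpb ▸ hp' b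
          have := pm_unique_edge hM' hbaM' (hp' a)
            (Sym2.mem_mk_right b a) (Sym2.mem_mk_left a (p' a))
          rcases Sym2.eq_iff.mp this with ⟨h1, -⟩ | ⟨h1, -⟩
          · exact hab h1.symm
          · exact hbd (h1.trans hw)
      have : G.Adj b c := G.mem_edgeSet.mp (hM'.1 (hw'' ▸ hp' b))
      exact hcon.2 ⟨hAad, this⟩
  have hle : forcingNum G M ≤ n - 2 := by
    have h2 : ({s(a,b), s(c,d)} : Set (Sym2 V)).ncard = 2 := Set.ncard_pair hne
    have hsub : ({s(a,b), s(c,d)} : Set (Sym2 V)) ⊆ M := by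
      rintro e (rfl | rfl) <;> assumption
    have := forcingNum_le hforceset
    rwa [Set.ncard_diff hsub, h2, hMcard] at this
  omega
end StarDerive

section CoreAux
variable {V : Type*}
lemma sym2_swap_ne_swap {a b c d : V} (h : s(a,b) ≠ s(c,d)) : s(b,a) ≠ s(d,c) := by
  rw [Sym2.eq_swap, show s(d,c) = s(c,d) from Sym2.eq_swap]
  exact h
lemma sym2_swap_ne_left {a b c d : V} (h : s(a,b) ≠ s(c,d)) : s(b,a) ≠ s(c,d) := by
  rw [Sym2.eq_swap]
  exact h
lemma sym2_swap_ne_right {a b c d : V} (h : s(a,b) ≠ s(c,d)) : s(a,b) ≠ s(d,c) := by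
  rw [show s(d,c) = s(c,d) from Sym2.eq_swap]
  exact h
end CoreAux

section Core
variable {V : Type*} {G : SimpleGraph V} {M N S : Set (Sym2 V)}

lemma core [Fintype V] {n : ℕ} (hcard : Fintype.card V = 2*n)
    (hM : IsPM G M) (hstar : StarProp G M) (hN : IsPM G N)
    (hS : IsForcingSet G N S) : n / 2 ≤ S.ncard := by
  by_contra hlt
  push_neg at hlt
  classical
  obtain ⟨p, hp⟩ := pm_partner hN
  obtain ⟨m, hm⟩ := pm_partner hM
  have hS2n : 2 * S.ncard + 2 ≤ n := by omega
  -- counting: at least 4 "heavy" vertices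
  set B := Finset.univ.filter (fun v : V => s(v, p v) ∈ S) with hBdef
  set A := Finset.univ.filter (fun v : V => s(v, p v) ∉ S) with hAdef
  set H := Finset.univ.filter
    (fun v : V => s(v, p v) ∉ S ∧ s(m v, p (m v)) ∉ S) with hHdef
  have hSfin : S.Finite := Set.toFinite S
  have hBcard : B.card ≤ 2 * S.ncard := by
    have hfib : ∀ e ∈ B.image (fun v => s(v, p v)),
        (B.filter (fun x => s(x, p x) = e)).card ≤ 2 := by
      intro e he
      obtain ⟨w, -, rfl⟩ := Finset.mem_image.mp he
      have hsub : B.filter (fun x => s(x, p x) = s(w, p w)) ⊆ {w, p w} := by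
        intro x hx
        have hx' := (Finset.mem_filter.mp hx).2
        have : x ∈ s(w, p w) := hx' ▸ Sym2.mem_mk_left x (p x)
        simpa using Sym2.mem_iff.mp this
      refine le_trans (Finset.card_le_card hsub) ?_
      exact le_trans (Finset.card_insert_le _ _) (by simp)
    have himg : B.image (fun v => s(v, p v)) ⊆ hSfin.toFinset := by
      intro e he
      obtain ⟨v, hv, rfl⟩ := Finset.mem_image.mp he
      exact hSfin.mem_toFinset.mpr ((Finset.mem_filter.mp hv).2)
    calc B.card ≤ 2 * (B.image (fun v => s(v, p v))).card :=
          Finset.card_le_mul_card_image _ 2 hfib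
      _ ≤ 2 * S.ncard := by
          have := Finset.card_le_card himg
          have h2 : hSfin.toFinset.card = S.ncard :=
            (Set.ncard_eq_toFinset_card S hSfin).symm
          omega
  have hAB : B.card + A.card = 2 * n := by
    have := Finset.card_filter_add_card_filter_not
      (s := (Finset.univ : Finset V)) (p := fun v : V => s(v, p v) ∈ S)
    simpa [hBdef, hAdef, hcard] using this
  have hHA : H ⊆ A := by
    intro v hv
    simp only [hHdef, hAdef, Finset.mem_filter] at hv ⊢
    exact ⟨hv.1, hv.2.1⟩
  have hinj : Set.InjOn m ((A \ H) : Finset V) := by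
    intro x hx y hy hxy
    have := pm_unique_edge hM (hm x) (hm y)
      (hxy ▸ Sym2.mem_mk_right x (m x)) (Sym2.mem_mk_right y (m y))
    rcases Sym2.eq_iff.mp this with ⟨h1, -⟩ | ⟨h1, h2⟩
    · exact h1
    · exact h1.trans (hxy.symm.trans h2)
  have hmapsto : ∀ v ∈ A \ H, m v ∈ B := by
    intro v hv
    rw [Finset.mem_sdiff] at hv
    have h1 := (Finset.mem_filter.mp hv.1).2
    have h2 : ¬(s(v, p v) ∉ S ∧ s(m v, p (m v)) ∉ S) := by
      intro hcontra
      exact hv.2 (Finset.mem_filter.mpr ⟨Finset.mem_univ v, hcontra⟩)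
    simp only [h1, not_true_eq_false, true_and, not_not] at h2
    · exact Finset.mem_filter.mpr ⟨Finset.mem_univ _, by tauto⟩
  have hAHB : (A \ H).card ≤ B.card :=
    Finset.card_le_card_of_injOn m hmapsto hinj
  have hsd : (A \ H).card = A.card - H.card := Finset.card_sdiff_of_subset hHA
  have hHcard : 4 ≤ H.card := by
    have hHA' := Finset.card_le_card hHA
    omega
  -- extract two heavy vertices on distinct M-edges
  have hv0 : ∃ v, v ∈ H := Finset.card_pos.mp (by omega) |>.imp (fun v hv => hv)
  obtain ⟨v, hvH⟩ := hv0
  have hH'card : 2 ≤ ((H.erase v).erase (m v)).card := by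
    have h1 := Finset.card_erase_le (a := m v) (s := H.erase v)
    have h2 : H.card - 1 ≤ (H.erase v).card := Finset.pred_card_le_card_erase
    have h3 : (H.erase v).card - 1 ≤ ((H.erase v).erase (m v)).card :=
      Finset.pred_card_le_card_erase
    omega
  obtain ⟨u, huH'⟩ := Finset.card_pos.mp (by omega : 0 < ((H.erase v).erase (m v)).card)
  have huH : u ∈ H := Finset.mem_of_mem_erase (Finset.mem_of_mem_erase huH')
  have huv : u ≠ v := Finset.ne_of_mem_erase (Finset.mem_of_mem_erase huH')
  have humv : u ≠ m v := Finset.ne_of_mem_erase huH'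
  -- names
  set b1 := v
  set c1 := m v with hc1def
  set b2 := u
  set c2 := m u with hc2def
  have he1M : s(b1, c1) ∈ M := hm v
  have he2M : s(b2, c2) ∈ M := hm u
  have he1e2 : s(b1, c1) ≠ s(b2, c2) := by
    intro h
    have : b2 ∈ s(b1, c1) := h ▸ Sym2.mem_mk_left b2 c2
    rcases Sym2.mem_iff.mp this with h' | h'
    · exact huv h'
    · exact humv h'
  have hb1c1 : b1 ≠ c1 := partner_ne hM he1M
  have hb2c2 : b2 ≠ c2 := partner_ne hM he2M
  have hc2b1 : c2 ≠ b1 := by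
    intro h
    refine he1e2 (pm_unique_edge hM he1M he2M ?_ (Sym2.mem_mk_right b2 c2))
    exact h ▸ Sym2.mem_mk_left b1 c1
  have hc2c1 : c2 ≠ c1 := by
    intro h
    refine he1e2 (pm_unique_edge hM he1M he2M ?_ (Sym2.mem_mk_right b2 c2))
    exact h ▸ Sym2.mem_mk_right b1 c1
  -- good facts
  have hvH' := (Finset.mem_filter.mp hvH).2
  have huH'' := (Finset.mem_filter.mp huH).2
  have hsb1 : s(b1, p b1) ∉ S := hvH'.1
  have hsc1 : s(c1, p c1) ∉ S := hvH'.2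
  have hsb2 : s(b2, p b2) ∉ S := huH''.1
  have hsc2 : s(c2, p c2) ∉ S := huH''.2
  -- define partner names
  set a1 := p b1 with ha1def
  set d1 := p c1 with hd1def
  set a2 := p b2 with ha2def
  set d2 := p c2 with hd2def
  have hg1N : s(a1, b1) ∈ N := mem_swap (hp b1)
  have hg1S : s(a1, b1) ∉ S := nmem_swap hsb1
  have hg1'N : s(c1, d1) ∈ N := hp c1
  have hg1'S : s(c1, d1) ∉ S := hsc1
  have hg2N : s(a2, b2) ∈ N := mem_swap (hp b2)
  have hg2S : s(a2, b2) ∉ S := nmem_swap hsb2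
  have hg2'N : s(c2, d2) ∈ N := hp c2
  have hg2'S : s(c2, d2) ∉ S := hsc2
  have hadj1 : G.Adj b1 c1 := G.mem_edgeSet.mp (hM.1 he1M)
  have hadj2 : G.Adj b2 c2 := G.mem_edgeSet.mp (hM.1 he2M)
  by_cases hfz1 : a1 = c1
  · have hfN1 : s(b1, c1) ∈ N := by rw [← hfz1]; exact hp b1
    have hfS1 : s(b1, c1) ∉ S := by rw [← hfz1]; exact hsb1
    by_cases hfz2 : a2 = c2
    · -- two frozen edges
      have hfN2 : s(b2, c2) ∈ N := by rw [← hfz2]; exact hp b2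
      have hfS2 : s(b2, c2) ∉ S := by rw [← hfz2]; exact hsb2
      rcases hstar b1 c1 b2 c2 he1M he2M he1e2 with ⟨h1, h2⟩ | ⟨h1, h2⟩
      · exact swap2 hN hS b1 c1 c2 b2 hfN1 (mem_swap hfN2) hfS1 (nmem_swap hfS2)
          (sym2_swap_ne_right he1e2) h1 h2
      · exact swap2 hN hS b1 c1 b2 c2 hfN1 hfN2 hfS1 hfS2 he1e2 h1 h2
    · -- frozen + domino (domino = D2)
      have hb2d2 : b2 ≠ d2 := by
        intro h
        have h' : s(c2, b2) ∈ N := by rw [h]; exact hp c2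
        exact hfz2 (partner_unique hN (hp b2) (mem_swap h'))
      have hfg : s(b1,c1) ≠ s(a2,b2) :=
        (ne_of_lmem (Sym2.mem_mk_right a2 b2) huv humv).symm
      have hfg' : s(b1,c1) ≠ s(c2,d2) :=
        (ne_of_lmem (Sym2.mem_mk_left c2 d2) hc2b1 hc2c1).symm
      have hgg' : s(a2,b2) ≠ s(c2,d2) :=
        ne_of_lmem (Sym2.mem_mk_right a2 b2) hb2c2 hb2d2
      exact frozdom hN hS hM hstar b1 c1 a2 b2 c2 d2 (m a2) (m d2) hfN1 hfS1 he1M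
        hg2N hg2S hg2'N hg2'S he2M (hm a2) (hm d2) hfg hfg' hgg'
  · have hb1d1 : b1 ≠ d1 := by
      intro h
      have h' : s(c1, b1) ∈ N := by rw [h]; exact hp c1
      exact hfz1 (partner_unique hN (hp b1) (mem_swap h'))
    have h11' : s(a1,b1) ≠ s(c1,d1) :=
      ne_of_lmem (Sym2.mem_mk_right a1 b1) hb1c1 hb1d1
    by_cases hfz2 : a2 = c2
    · -- frozen (D2) + domino (D1)
      have hfN2 : s(b2, c2) ∈ N := by rw [← hfz2]; exact hp b2
      have hfS2 : s(b2, c2) ∉ S := by rw [← hfz2]; exact hsb2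
      have hfg : s(b2,c2) ≠ s(a1,b1) :=
        (ne_of_lmem (Sym2.mem_mk_right a1 b1) huv.symm hc2b1.symm).symm
      have hfg' : s(b2,c2) ≠ s(c1,d1) :=
        (ne_of_lmem (Sym2.mem_mk_left c1 d1) humv.symm hc2c1.symm).symm
      exact frozdom hN hS hM hstar b2 c2 a1 b1 c1 d1 (m a1) (m d1) hfN2 hfS2 he2M
        hg1N hg1S hg1'N hg1'S he1M (hm a1) (hm d1) hfg hfg' h11'
    · -- two dominoes
      have hb2d2 : b2 ≠ d2 := by
        intro h
        have h' : s(c2, b2) ∈ N := by rw [h]; exact hp c2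
        exact hfz2 (partner_unique hN (hp b2) (mem_swap h'))
      have h22' : s(a2,b2) ≠ s(c2,d2) :=
        ne_of_lmem (Sym2.mem_mk_right a2 b2) hb2c2 hb2d2
      by_cases hE21 : s(c1,d1) = s(a2,b2)
      · rcases Sym2.eq_iff.mp hE21 with ⟨hca, hdb⟩ | ⟨hcb, -⟩
        · by_cases hE12 : s(a1,b1) = s(c2,d2)
          · rcases Sym2.eq_iff.mp hE12 with ⟨hac, hbd⟩ | ⟨-, hbc2⟩
            · -- full 4-cycle: swap {g1,g1'} to {e1,e2}
              have hADJ : G.Adj a1 d1 := by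
                have h' := hadj2
                rw [← hdb, ← hac] at h'
                exact h'.symm
              exact swap2 hN hS b1 a1 d1 c1 (hp b1) (mem_swap (hp c1)) hsb1
                (nmem_swap hsc1) (sym2_swap_ne_swap h11') hadj1 hADJ
            · exact absurd hbc2.symm hc2b1
          · -- run3 variant A
            have hne12 : s(c1,d1) ≠ s(c2,d2) := by rw [hE21]; exact h22'
            have hqM : s(d1, c2) ∈ M := by rw [hdb]; exact he2M
            exact run3 hN hS hM hstar a1 b1 c1 d1 c2 d2 (m a1) (m d2)
              hg1N hg1S hg1'N hg1'S hg2'N hg2'S h11' hE12 hne12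
              he1M hqM (hm a1) (hm d2)
        · exact absurd hcb.symm humv
      · by_cases hE11 : s(a1,b1) = s(a2,b2)
        · rcases Sym2.eq_iff.mp hE11 with ⟨-, hbb⟩ | ⟨hab2, hba⟩
          · exact absurd hbb.symm huv
          · by_cases hE22 : s(c1,d1) = s(c2,d2)
            · rcases Sym2.eq_iff.mp hE22 with ⟨hcc, -⟩ | ⟨hcd2, hdc⟩
              · exact absurd hcc.symm hc2c1
              · -- full 4-cycle
                have hADJ : G.Adj a1 d1 := by
                  have h' := hadj2
                  rw [← hab2, ← hdc] at h'
                  exact h'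
                exact swap2 hN hS b1 a1 d1 c1 (hp b1) (mem_swap (hp c1)) hsb1
                  (nmem_swap hsc1) (sym2_swap_ne_swap h11') hadj1 hADJ
            · -- run3 variant B
              have hne01 : s(d1,c1) ≠ s(b1,a1) := (sym2_swap_ne_swap h11').symm
              have hne02 : s(d1,c1) ≠ s(c2,d2) := sym2_swap_ne_left hE22
              have hne12 : s(b1,a1) ≠ s(c2,d2) := by rw [hba, hab2]; exact h22'
              have hqM : s(a1, c2) ∈ M := by rw [hab2]; exact he2M
              exact run3 hN hS hM hstar d1 c1 b1 a1 c2 d2 (m d1) (m d2)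
                (mem_swap (hp c1)) (nmem_swap hsc1) (hp b1) hsb1 hg2'N hg2'S
                hne01 hne02 hne12 (mem_swap he1M) hqM (hm d1) (hm d2)
        · by_cases hE22 : s(c1,d1) = s(c2,d2)
          · rcases Sym2.eq_iff.mp hE22 with ⟨hcc, -⟩ | ⟨hcd2, hdc⟩
            · exact absurd hcc.symm hc2c1
            · -- run3 variant C
              have hne02 : s(a1,b1) ≠ s(b2,a2) := sym2_swap_ne_right hE11
              have hne12 : s(c1,d1) ≠ s(b2,a2) := sym2_swap_ne_right hE21
              have hqM : s(d1, b2) ∈ M := by rw [hdc]; exact mem_swap he2M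
              exact run3 hN hS hM hstar a1 b1 c1 d1 b2 a2 (m a1) (m a2)
                hg1N hg1S hg1'N hg1'S (hp b2) hsb2
                h11' hne02 hne12 he1M hqM (hm a1) (hm a2)
          · by_cases hE12 : s(a1,b1) = s(c2,d2)
            · rcases Sym2.eq_iff.mp hE12 with ⟨hac2, hbd2⟩ | ⟨-, hbc2⟩
              · -- run3 variant D
                have hne01 : s(d1,c1) ≠ s(b1,a1) := (sym2_swap_ne_swap h11').symm
                have hne02 : s(d1,c1) ≠ s(b2,a2) := sym2_swap_ne_swap hE21
                have hne12 : s(b1,a1) ≠ s(b2,a2) := sym2_swap_ne_swap hE11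
                have hqM : s(a1, b2) ∈ M := by rw [hac2]; exact mem_swap he2M
                exact run3 hN hS hM hstar d1 c1 b1 a1 b2 a2 (m d1) (m a2)
                  (mem_swap (hp c1)) (nmem_swap hsc1) (hp b1) hsb1 (hp b2) hsb2
                  hne01 hne02 hne12 (mem_swap he1M) hqM (hm d1) (hm a2)
              · exact absurd hbc2.symm hc2b1
            · -- two disjoint dominoes
              exact twodom hN hS hM hstar a1 b1 c1 d1 a2 b2 c2 d2
                (m a1) (m d1) (m a2) (m d2)
                hg1N hg1S hg1'N hg1'S hg2N hg2S hg2'N hg2'S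
                h11' hE11 hE12 hE21 hE22 h22'
                he1M he2M (hm a1) (hm d1) (hm a2) (hm d2)
end Core

/-- Corollary 5.2. -/
theorem stmt12 {V : Type*} [Fintype V] (n : ℕ)
    (G : SimpleGraph V) (hcard : Fintype.card V = 2 * n)
    (hPM : ∃ M, IsPM G M) (hF : maxForcing G = n - 1) :
    n / 2 ≤ minForcing G := by
  rcases Nat.lt_or_ge n 2 with hn | hn
  · have h0 : n / 2 = 0 := by omega
    rw [h0]
    exact Nat.zero_le _
  · obtain ⟨M0, hM0⟩ := hPM
    have hcardM : ∀ M', IsPM G M' → M'.ncard = n := by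
      intro M' hM'
      obtain ⟨pM', hpM'⟩ := pm_partner hM'
      have := pm_card hM' hpM'
      omega
    have hTne : {k | ∃ M, IsPM G M ∧ forcingNum G M = k}.Nonempty :=
      ⟨forcingNum G M0, M0, hM0, rfl⟩
    have hTbdd : BddAbove {k | ∃ M, IsPM G M ∧ forcingNum G M = k} := by
      refine ⟨n, ?_⟩
      rintro k ⟨M', hM', rfl⟩
      calc forcingNum G M' ≤ M'.ncard := forcingNum_le (pm_self_forcing hM')
        _ = n := hcardM M' hM'
    have hmem : (n - 1) ∈ {k | ∃ M, IsPM G M ∧ forcingNum G M = k} := by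
      rw [← hF]
      exact Nat.sSup_mem hTne hTbdd
    obtain ⟨Mx, hMx, hMxf⟩ := hmem
    have hstar : StarProp G Mx := star_of_max hMx hMxf (hcardM Mx hMx) hn
    refine le_csInf ⟨forcingNum G M0, M0, hM0, rfl⟩ ?_
    rintro k ⟨N, hN, rfl⟩
    obtain ⟨S, hSf, hSc⟩ := exists_forcing_ncard_eq hN
    rw [← hSc]
    exact core hcard hMx hstar hN hSf
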